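/- Let Ω ⊆ 𝕆 be a domain and Ω̂ := {(z,I) ∈ ℂ × 𝕊 : τ_I(z) ∈ Ω} its disjoint union of complex slices, equipped with the topology whose open sets are unions ⋃_I O^I × {I} with each O^I open in Ω^I. Then the canonical projection π : Ω̂ → Ω̂/≃ onto the quotient by the CCL equivalence relation is an open map. -/

import Mathlib

noncomputable section

/-- The octonions, realized as the Cayley–Dickson double of the quaternions. -/
@[ext] structure Octonion : Type where
  a : Quaternion ℝ
  b : Quaternion ℝ

notation "𝕆" => Octonion

namespace Octonion

instance : Zero 𝕆 := ⟨⟨0, 0⟩⟩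
instance : One 𝕆 := ⟨⟨1, 0⟩⟩
instance : Add 𝕆 := ⟨fun x y => ⟨x.a + y.a, x.b + y.b⟩⟩
instance : Neg 𝕆 := ⟨fun x => ⟨-x.a, -x.b⟩⟩
instance : Sub 𝕆 := ⟨fun x y => ⟨x.a - y.a, x.b - y.b⟩⟩
/-- Cayley–Dickson multiplication. -/
instance : Mul 𝕆 := ⟨fun x y => ⟨x.a * y.a - star y.b * x.b, y.b * x.a + x.b * star y.a⟩⟩
instance : SMul ℝ 𝕆 := ⟨fun r x => ⟨r • x.a, r • x.b⟩⟩
instance : SMul ℕ 𝕆 := ⟨fun n x => ⟨n • x.a, n • x.b⟩⟩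
instance : SMul ℤ 𝕆 := ⟨fun n x => ⟨n • x.a, n • x.b⟩⟩

def toProd (x : 𝕆) : Quaternion ℝ × Quaternion ℝ := (x.a, x.b)

lemma toProd_injective : Function.Injective toProd := by
  intro x y h
  cases x; cases y
  simpa [toProd, Prod.ext_iff, Octonion.mk.injEq] using h

instance : AddCommGroup 𝕆 :=
  Function.Injective.addCommGroup toProd toProd_injective rfl (fun _ _ => rfl) (fun _ => rfl)
    (fun _ _ => rfl) (fun _ _ => rfl) (fun _ _ => rfl)

def toProdHom : 𝕆 →+ Quaternion ℝ × Quaternion ℝ :=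
  { toFun := toProd, map_zero' := rfl, map_add' := fun _ _ => rfl }

instance : Module ℝ 𝕆 :=
  Function.Injective.module ℝ toProdHom toProd_injective (fun _ _ => rfl)

def toProdLin : 𝕆 →ₗ[ℝ] Quaternion ℝ × Quaternion ℝ :=
  { toFun := toProd, map_add' := fun _ _ => rfl, map_smul' := fun _ _ => rfl }

instance : NormedAddCommGroup 𝕆 := NormedAddCommGroup.induced 𝕆 _ toProdHom toProd_injective
instance : NormedSpace ℝ 𝕆 := NormedSpace.induced ℝ 𝕆 _ toProdLin

/-- Octonionic conjugation. -/
def conj (x : 𝕆) : 𝕆 := ⟨star x.a, -x.b⟩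

/-- The real part of an octonion. -/
def re (x : 𝕆) : ℝ := x.a.re

/-- The imaginary part of an octonion. -/
def im (x : 𝕆) : 𝕆 := ⟨x.a.im, x.b⟩

/-- The squared (Euclidean) norm of an octonion. -/
def normSq (x : 𝕆) : ℝ := Quaternion.normSq x.a + Quaternion.normSq x.b

/-- The (Euclidean) norm of an octonion. -/
def onorm (x : 𝕆) : ℝ := Real.sqrt (normSq x)

instance : Inv 𝕆 := ⟨fun x => (normSq x)⁻¹ • conj x⟩

/-- The sphere of imaginary units of `𝕆`. -/
def sph : Set 𝕆 := {I | onorm I = 1 ∧ re I = 0}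

/-- `tau I (α + β i) = α + β I`. -/
def tau (I : 𝕆) (z : ℂ) : 𝕆 := z.re • (1 : 𝕆) + z.im • I

end Octonion

namespace Octonion

/-- `γ` and `Θ` define a circular lifting `t ↦ τ_{Θ t}(γ t)`: `γ` is a continuous path in `ℂ`
(the base) and `Θ` a continuous path in the sphere of imaginary units (the spherical
coordinate). -/
def IsCircularLifting (γ : unitInterval → ℂ) (Θ : unitInterval → 𝕆) : Prop :=
  Continuous γ ∧ Continuous Θ ∧ ∀ t, Θ t ∈ sph

/-- `x` and `x'` are CCL-connected in `Ω`: they are the terminal points of a pair of coupled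
circular liftings contained in `Ω` (common base, same initial spherical coordinate). -/
def CCLConnected (Ω : Set 𝕆) (x x' : 𝕆) : Prop :=
  ∃ γ Θ₁ Θ₂, IsCircularLifting γ Θ₁ ∧ IsCircularLifting γ Θ₂ ∧ Θ₁ 0 = Θ₂ 0 ∧
    (∀ t, tau (Θ₁ t) (γ t) ∈ Ω) ∧ (∀ t, tau (Θ₂ t) (γ t) ∈ Ω) ∧
    tau (Θ₁ 1) (γ 1) = x ∧ tau (Θ₂ 1) (γ 1) = x'

/-- CCL-equivalence in `Ω`: the equivalence closure of CCL-connectedness (finite chains). -/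
def CCLEquiv (Ω : Set 𝕆) : 𝕆 → 𝕆 → Prop := Relation.EqvGen (CCLConnected Ω)

end Octonion

namespace Octonion

/-- The disjoint union `Ω̂` of the complex slices of `Ω`, topologized as a disjoint union
(a set is open iff it is a union `⋃_I O^I × {I}` with each `O^I` open in `Ω^I`). -/
abbrev OHat (Ω : Set 𝕆) : Type := Σ I : sph, {z : ℂ // tau I.1 z ∈ Ω}

/-- The CCL equivalence relation on `Ω̂`: `(z,I) ≃ (z',I')` iff `z = z'` and `τ_I z`,
`τ_{I'} z'` are CCL-equivalent in `Ω`. -/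
def ohatSetoid (Ω : Set 𝕆) : Setoid (OHat Ω) where
  r p q := p.2.1 = q.2.1 ∧ CCLEquiv Ω (tau p.1.1 p.2.1) (tau q.1.1 q.2.1)
  iseqv := ⟨fun p => ⟨rfl, Relation.EqvGen.refl _⟩,
    fun h => ⟨h.1.symm, Relation.EqvGen.symm _ _ h.2⟩,
    fun h h' => ⟨h.1.trans h'.1, Relation.EqvGen.trans _ _ _ h.2 h'.2⟩⟩

/-- The quotient `D_Ω` of `Ω̂` by CCL equivalence, with the quotient topology. -/
abbrev DOmega (Ω : Set 𝕆) : Type := Quotient (ohatSetoid Ω)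

end Octonion

/-!
Openness of the projection is local infectivity: if `τ_K(z)` and `τ_L(z)` are CCL-equivalent
in `Ω`, then so are `τ_K(z')` and `τ_L(z')` for all `z'` near `z`. Since CCL-connectedness is
symmetric, the equivalence is a chain of CCL-connected pairs, all of whose points lie on the
sphere `{τ_M(z) : M ∈ 𝕊}`, so it suffices to propagate a single link and an equality
`τ_K(z) = τ_L(z)`. A pair of coupled liftings ending at `τ_A(w), τ_B(w)` prolongs along a short
segment from `w` to any nearby `w'` with fixed spherical coordinates, and its base ends at `z`
or at `z̄`, where `τ_A(z̄) = τ_{-A}(z)`. If `τ_K(z) = τ_L(z)` with `K ≠ L`, then `z` is real and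
all slices meet there: couple the constant lifting at `K` with a path from `K` to `L` in the
(path-connected) sphere `𝕊`, then prolong.
-/

namespace Octonion

open Filter Topology

lemma isometry_toProd : Isometry toProd :=
  AddMonoidHomClass.isometry_of_norm toProdHom fun _ => rfl

lemma continuous_onorm : Continuous onorm := by
  have h := isometry_toProd.continuous
  exact Real.continuous_sqrt.comp ((Quaternion.continuous_normSq.comp (continuous_fst.comp h)).add
    (Quaternion.continuous_normSq.comp (continuous_snd.comp h)))

lemma onorm_nonneg (x : 𝕆) : 0 ≤ onorm x := Real.sqrt_nonneg _

lemma onorm_smul (r : ℝ) (x : 𝕆) : onorm (r • x) = |r| * onorm x := by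
  have : normSq (r • x) = r ^ 2 * normSq x := by
    simp only [normSq, show (r • x).a = r • x.a from rfl, show (r • x).b = r • x.b from rfl,
      Quaternion.normSq_smul]
    ring
  rw [onorm, this, Real.sqrt_mul (sq_nonneg r), Real.sqrt_sq_eq_abs, onorm]

lemma onorm_neg (x : 𝕆) : onorm (-x) = onorm x := by
  simpa using onorm_smul (-1) x

lemma eq_zero_of_onorm_eq_zero {x : 𝕆} (h : onorm x = 0) : x = 0 := by
  have hsq : Quaternion.normSq x.a + Quaternion.normSq x.b = 0 :=
    (Real.sqrt_eq_zero (add_nonneg Quaternion.normSq_nonneg Quaternion.normSq_nonneg)).mp h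
  have ha := Quaternion.normSq_nonneg (a := x.a)
  have hb := Quaternion.normSq_nonneg (a := x.b)
  ext1
  · exact Quaternion.normSq_eq_zero.mp (by linarith)
  · exact Quaternion.normSq_eq_zero.mp (by linarith)

lemma onorm_zero : onorm 0 = 0 := by
  simp [onorm, normSq, show (0 : 𝕆).a = 0 from rfl, show (0 : 𝕆).b = 0 from rfl]

def reₗ : 𝕆 →ₗ[ℝ] ℝ := (QuaternionAlgebra.reₗ _ _ _).comp ((LinearMap.fst ℝ _ _).comp toProdLin)

lemma reₗ_apply (x : 𝕆) : reₗ x = re x := rfl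

lemma neg_mem_sph {I : 𝕆} (hI : I ∈ sph) : -I ∈ sph :=
  ⟨(onorm_neg I).trans hI.1, by rw [← reₗ_apply, map_neg, reₗ_apply, hI.2, neg_zero]⟩

lemma continuous_tau (I : 𝕆) : Continuous (tau I) := by
  unfold tau; fun_prop

lemma tau_conj (I : 𝕆) (z : ℂ) : tau I (starRingEnd ℂ z) = tau (-I) z := by
  simp [tau]

lemma tau_eq_of_im_eq_zero {z : ℂ} (hz : z.im = 0) (I J : 𝕆) : tau I z = tau J z := by
  simp [tau, hz]

lemma eq_of_tau_eq {I J : 𝕆} {z : ℂ} (hz : z.im ≠ 0) (h : tau I z = tau J z) : I = J :=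
  smul_right_injective 𝕆 hz (add_left_cancel h)

lemma re_tau {I : 𝕆} (hI : re I = 0) (z : ℂ) : re (tau I z) = z.re := by
  rw [← reₗ_apply, tau, map_add, map_smul, map_smul, reₗ_apply, reₗ_apply, hI,
    show re 1 = 1 from Quaternion.re_one]
  simp

lemma eq_or_eq_conj_of_tau_eq {I J : 𝕆} {z w : ℂ} (hI : I ∈ sph) (hJ : J ∈ sph)
    (h : tau I z = tau J w) : w = z ∨ w = starRingEnd ℂ z := by
  have hre : z.re = w.re := by rw [← re_tau hI.2 z, ← re_tau hJ.2 w, h]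
  have him : |z.im| = |w.im| := by
    have : z.im • I = w.im • J := by
      simpa [tau, hre] using h
    simpa [onorm_smul, hI.1, hJ.1] using congrArg onorm this
  rcases abs_eq_abs.mp him with him | him
  · exact Or.inl (Complex.ext hre.symm him.symm)
  · exact Or.inr (Complex.ext hre.symm (by simp [him]))

lemma one_lt_rank_ker_reₗ : 1 < Module.rank ℝ (LinearMap.ker reₗ) := by
  let i : LinearMap.ker reₗ := ⟨⟨⟨0, 1, 0, 0⟩, 0⟩, rfl⟩
  let j : LinearMap.ker reₗ := ⟨⟨⟨0, 0, 1, 0⟩, 0⟩, rfl⟩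
  have hi : i ≠ 0 := fun h =>
    one_ne_zero (congrArg (fun v : LinearMap.ker reₗ => (v : 𝕆).a.imI) h)
  have hij : LinearIndependent ℝ ![i, j] := by
    refine (LinearIndependent.pair_iff' hi).mpr fun c h => ?_
    have h' : c * 0 = 1 := congrArg (fun v : LinearMap.ker reₗ => (v : 𝕆).a.imJ) h
    simp at h'
  exact Cardinal.one_lt_two.trans_le (by simpa using hij.cardinal_le_rank)

/-- The sphere of imaginary units is the radial projection of the punctured hyperplane
`re = 0`, which is path connected since it has dimension `7 > 1`. -/
theorem isPathConnected_sph : IsPathConnected sph := by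
  have hne : ∀ v : LinearMap.ker reₗ, v ≠ 0 → onorm v ≠ 0 := fun v hv h =>
    hv (Subtype.ext (eq_zero_of_onorm_eq_zero h))
  have himage : (fun v : LinearMap.ker reₗ => (onorm v)⁻¹ • (v : 𝕆)) '' {0}ᶜ = sph := by
    ext I
    constructor
    · rintro ⟨v, hv, rfl⟩
      refine ⟨?_, ?_⟩
      · rw [onorm_smul, abs_inv, abs_of_nonneg (onorm_nonneg _), inv_mul_cancel₀ (hne v hv)]
      · rw [← reₗ_apply, map_smul, v.2, smul_zero]
    · intro hI
      have hI0 : (⟨I, hI.2⟩ : LinearMap.ker reₗ) ≠ 0 := fun h => by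
        simpa [onorm_zero] using hI.1.symm.trans (congrArg (onorm ∘ Subtype.val) h)
      exact ⟨⟨I, hI.2⟩, hI0, by simp [hI.1]⟩
  rw [← himage]
  refine (isPathConnected_compl_singleton_of_one_lt_rank one_lt_rank_ker_reₗ 0).image' ?_
  exact ContinuousOn.smul
    ((continuous_onorm.comp continuous_subtype_val).continuousOn.inv₀ fun v hv => hne v hv)
    continuous_subtype_val.continuousOn

variable {Ω : Set 𝕆}

/-- Used with `γ` and `Θ` paths, which supply the continuity of a circular lifting. -/
def IsLiftingIn (Ω : Set 𝕆) (γ : unitInterval → ℂ) (Θ : unitInterval → 𝕆) : Prop :=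
  ∀ t, Θ t ∈ sph ∧ tau (Θ t) (γ t) ∈ Ω

lemma IsLiftingIn.trans {a b c : ℂ} {I J K : 𝕆} {γ : Path a b} {γ' : Path b c} {Θ : Path I J}
    {Θ' : Path J K} (h : IsLiftingIn Ω γ Θ) (h' : IsLiftingIn Ω γ' Θ') :
    IsLiftingIn Ω (γ.trans γ') (Θ.trans Θ') := by
  intro t
  simp only [Path.trans_apply]
  split_ifs
  exacts [h _, h' _]

lemma cclConnected_iff {x y : 𝕆} :
    CCLConnected Ω x y ↔ ∃ (w₀ w : ℂ) (γ : Path w₀ w) (I₀ A B : 𝕆) (Θ₁ : Path I₀ A)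
      (Θ₂ : Path I₀ B), IsLiftingIn Ω γ Θ₁ ∧ IsLiftingIn Ω γ Θ₂ ∧ tau A w = x ∧ tau B w = y := by
  constructor
  · rintro ⟨γ, Θ₁, Θ₂, ⟨hγ, hΘ₁, hs₁⟩, ⟨-, hΘ₂, hs₂⟩, h0, hm₁, hm₂, rfl, rfl⟩
    exact ⟨_, _, ⟨⟨γ, hγ⟩, rfl, rfl⟩, _, _, _, ⟨⟨Θ₁, hΘ₁⟩, rfl, rfl⟩, ⟨⟨Θ₂, hΘ₂⟩, h0.symm, rfl⟩,
      fun t => ⟨hs₁ t, hm₁ t⟩, fun t => ⟨hs₂ t, hm₂ t⟩, rfl, rfl⟩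
  · rintro ⟨w₀, w, γ, I₀, A, B, Θ₁, Θ₂, h₁, h₂, rfl, rfl⟩
    exact ⟨γ, Θ₁, Θ₂, ⟨γ.continuous, Θ₁.continuous, fun t => (h₁ t).1⟩,
      ⟨γ.continuous, Θ₂.continuous, fun t => (h₂ t).1⟩, by simp, fun t => (h₁ t).2,
      fun t => (h₂ t).2, by simp, by simp⟩

lemma CCLConnected.symm {x y : 𝕆} (h : CCLConnected Ω x y) : CCLConnected Ω y x := by
  obtain ⟨γ, Θ₁, Θ₂, l₁, l₂, h0, m₁, m₂, rfl, rfl⟩ := h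
  exact ⟨γ, Θ₂, Θ₁, l₂, l₁, h0.symm, m₂, m₁, rfl, rfl⟩

lemma CCLConnected.mem_left {x y : 𝕆} (h : CCLConnected Ω x y) : x ∈ Ω := by
  obtain ⟨γ, Θ₁, -, -, -, -, m₁, -, rfl, -⟩ := h
  exact m₁ 1

lemma CCLConnected.mem_right {x y : 𝕆} (h : CCLConnected Ω x y) : y ∈ Ω :=
  h.symm.mem_left

lemma CCLConnected.exists_tau_eq_left {x y L : 𝕆} {z : ℂ} (h : CCLConnected Ω x y)
    (hL : L ∈ sph) (hy : tau L z = y) : ∃ M ∈ sph, tau M z = x := by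
  obtain ⟨γ, Θ₁, Θ₂, l₁, l₂, -, -, -, rfl, rfl⟩ := h
  rcases eq_or_eq_conj_of_tau_eq hL (l₂.2.2 1) hy with hw | hw
  · exact ⟨Θ₁ 1, l₁.2.2 1, by rw [hw]⟩
  · exact ⟨-Θ₁ 1, neg_mem_sph (l₁.2.2 1), by rw [hw, tau_conj]⟩

/-- A pair of coupled liftings ending over `w` can be prolonged along a segment from `w` to any
nearby `w'`, keeping both spherical coordinates fixed. -/
lemma eventually_cclConnected_of_isLiftingIn (hΩ : IsOpen Ω) {w₀ w : ℂ} {I₀ A B : 𝕆}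
    {γ : Path w₀ w} {Θ₁ : Path I₀ A} {Θ₂ : Path I₀ B} (h₁ : IsLiftingIn Ω γ Θ₁)
    (h₂ : IsLiftingIn Ω γ Θ₂) : ∀ᶠ w' in 𝓝 w, CCLConnected Ω (tau A w') (tau B w') := by
  have hA : A ∈ sph ∧ tau A w ∈ Ω := by simpa using h₁ 1
  have hB : B ∈ sph ∧ tau B w ∈ Ω := by simpa using h₂ 1
  obtain ⟨ε, hε, hball⟩ := Metric.isOpen_iff.mp
    ((hΩ.preimage (continuous_tau A)).inter (hΩ.preimage (continuous_tau B))) w ⟨hA.2, hB.2⟩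
  filter_upwards [Metric.ball_mem_nhds w hε] with w' hw'
  have hσ := ((convex_ball w ε).isPathConnected ⟨w, Metric.mem_ball_self hε⟩).joinedIn w
    (Metric.mem_ball_self hε) w' hw'
  exact cclConnected_iff.mpr ⟨_, _, γ.trans hσ.somePath, _, _, _, Θ₁.trans (Path.refl A),
    Θ₂.trans (Path.refl B), h₁.trans fun t => ⟨hA.1, (hball (hσ.somePath_mem t)).1⟩,
    h₂.trans fun t => ⟨hB.1, (hball (hσ.somePath_mem t)).2⟩, rfl, rfl⟩

/-- Over a real point all slices meet, so the spherical coordinate can be moved freely there. -/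
lemma eventually_cclConnected_of_im_eq_zero (hΩ : IsOpen Ω) {K L : 𝕆} {z : ℂ} (hK : K ∈ sph)
    (hL : L ∈ sph) (hz : z.im = 0) (hzΩ : tau K z ∈ Ω) :
    ∀ᶠ z' in 𝓝 z, CCLConnected Ω (tau K z') (tau L z') :=
  let Θ := (isPathConnected_sph.joinedIn K hK L hL).somePath
  eventually_cclConnected_of_isLiftingIn hΩ (γ := Path.refl z) (Θ₁ := Path.refl K) (Θ₂ := Θ)
    (fun _ => ⟨hK, hzΩ⟩)
    (fun t => ⟨JoinedIn.somePath_mem _ t, tau_eq_of_im_eq_zero hz K (Θ t) ▸ hzΩ⟩)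

def LocallyCCLEquiv (Ω : Set 𝕆) (z : ℂ) (K L : 𝕆) : Prop :=
  ∀ᶠ z' in 𝓝 z, tau L z' ∈ Ω ∧ CCLEquiv Ω (tau K z') (tau L z')

lemma LocallyCCLEquiv.trans {z : ℂ} {K L M : 𝕆} (h : LocallyCCLEquiv Ω z K L)
    (h' : LocallyCCLEquiv Ω z L M) : LocallyCCLEquiv Ω z K M := by
  filter_upwards [h, h'] with z' hKL hLM
  exact ⟨hLM.1, .trans _ _ _ hKL.2 hLM.2⟩

lemma LocallyCCLEquiv.of_eventually_cclConnected {z : ℂ} {K L : 𝕆}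
    (h : ∀ᶠ z' in 𝓝 z, CCLConnected Ω (tau K z') (tau L z')) : LocallyCCLEquiv Ω z K L :=
  h.mono fun _ h => ⟨h.mem_right, .rel _ _ h⟩

lemma LocallyCCLEquiv.of_tau_eq (hΩ : IsOpen Ω) {z : ℂ} {K L : 𝕆} (hK : K ∈ sph)
    (hL : L ∈ sph) (hzΩ : tau K z ∈ Ω) (h : tau K z = tau L z) : LocallyCCLEquiv Ω z K L := by
  by_cases hz : z.im = 0
  · exact .of_eventually_cclConnected (eventually_cclConnected_of_im_eq_zero hΩ hK hL hz hzΩ)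
  · obtain rfl := eq_of_tau_eq hz h
    filter_upwards [(hΩ.preimage (continuous_tau K)).mem_nhds hzΩ] with z' hz'
    exact ⟨hz', .refl _⟩

/-- The terminal points of a pair of coupled liftings are reached over `z` or over `conj z`;
in the second case the liftings are read off through `tau_conj`. -/
lemma LocallyCCLEquiv.of_cclConnected (hΩ : IsOpen Ω) {z : ℂ} {K L : 𝕆} (hK : K ∈ sph)
    (hL : L ∈ sph) (h : CCLConnected Ω (tau K z) (tau L z)) : LocallyCCLEquiv Ω z K L := by
  obtain ⟨w₀, w, γ, I₀, A, B, Θ₁, Θ₂, h₁, h₂, hAK, hBL⟩ := cclConnected_iff.mp h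
  have hA : A ∈ sph := by simpa using (h₁ 1).1
  have hB : B ∈ sph := by simpa using (h₂ 1).1
  have hE := eventually_cclConnected_of_isLiftingIn hΩ h₁ h₂
  obtain ⟨A', hA', B', hB', hAK', hBL', hE'⟩ : ∃ A' ∈ sph, ∃ B' ∈ sph,
      tau A' z = tau K z ∧ tau B' z = tau L z ∧
      ∀ᶠ z' in 𝓝 z, CCLConnected Ω (tau A' z') (tau B' z') := by
    rcases eq_or_eq_conj_of_tau_eq hK hA hAK.symm with rfl | rfl
    · exact ⟨A, hA, B, hB, hAK, hBL, hE⟩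
    · refine ⟨-A, neg_mem_sph hA, -B, neg_mem_sph hB, by rwa [← tau_conj], by rwa [← tau_conj], ?_⟩
      simpa only [tau_conj] using (Complex.continuous_conj.tendsto z).eventually hE
  exact (of_tau_eq hΩ hK hA' h.mem_left hAK'.symm).trans <|
    (of_eventually_cclConnected hE').trans (of_tau_eq hΩ hB' hL (hBL' ▸ h.mem_right) hBL')

/-- As CCL-connectedness is symmetric, a CCL equivalence is a chain of CCL-connected pairs, and
every point of the chain lies on the sphere `tau · z '' sph` over `z`. -/
theorem LocallyCCLEquiv.of_cclEquiv (hΩ : IsOpen Ω) {z : ℂ} {K L : 𝕆} (hK : K ∈ sph)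
    (hL : L ∈ sph) (hzΩ : tau K z ∈ Ω) (h : CCLEquiv Ω (tau K z) (tau L z)) :
    LocallyCCLEquiv Ω z K L := by
  have : Std.Symm (CCLConnected Ω) := ⟨fun _ _ => CCLConnected.symm⟩
  rw [CCLEquiv, Relation.EqvGen.eqvGen_eq_reflTransGen] at h
  generalize hy : tau L z = y at h
  induction h generalizing L with
  | refl => exact of_tau_eq hΩ hK hL hzΩ hy.symm
  | tail _ hbc ih =>
    obtain ⟨M, hM, rfl⟩ := hbc.exists_tau_eq_left hL hy
    exact (ih hM rfl).trans (of_cclConnected hΩ hM hL (hy ▸ hbc))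

end Octonion

open Octonion in
theorem stmt16_general (Ω : Set 𝕆) (hΩo : IsOpen Ω) :
    IsOpenMap (Quotient.mk (ohatSetoid Ω) : OHat Ω → DOmega Ω) := by
  intro U hU
  rw [isOpen_coinduced, isOpen_sigma_iff]
  intro I
  refine isOpen_iff_mem_nhds.mpr fun z ⟨⟨J, w⟩, hwU, hwz⟩ => ?_
  obtain ⟨hwz, hJI⟩ := Quotient.exact hwz
  obtain ⟨u, hu, huU⟩ := (mem_nhds_induced _ _ _).mp ((isOpen_sigma_iff.mp hU J).mem_nhds hwU)
  have hloc := LocallyCCLEquiv.of_cclEquiv hΩo I.2 J.2 z.2 (hwz ▸ hJI.symm)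
  filter_upwards [continuous_subtype_val.continuousAt.eventually (hloc.and (hwz ▸ hu))]
    with z' ⟨⟨hz'Ω, hequiv⟩, hz'u⟩
  exact ⟨⟨J, z', hz'Ω⟩, huU hz'u, Quotient.sound ⟨rfl, hequiv.symm⟩⟩

open Octonion in
/-- the canonical projection `π : Ω̂ → Ω̂/≃` onto the quotient by the CCL
equivalence relation is an open map. -/
theorem stmt16 (Ω : Set 𝕆) (hΩo : IsOpen Ω) (hΩc : IsConnected Ω) :
    IsOpenMap (Quotient.mk (ohatSetoid Ω) : OHat Ω → DOmega Ω) :=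
  stmt16_general Ω hΩo
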